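/- arXiv:1312.1305 — 4 statements merged into one kernel-verified Lean document; each statement's English description precedes it below -/
import Mathlib

section
/- Let σ: ℝ → X be an (L,b)-quasi-isometric embedding into a metric space X, set x₀ = σ(0), R₁ ≥ 2b(L²+2), t₁ = L(b+R₁), E = σ((−∞,−t₁]) and F = σ([t₁,∞)). Let γ: [0,ℓ] → X be a 1-Lipschitz curve with γ(0) ∈ E and γ(ℓ) ∈ F, and let M = sup_{s ∈ [0,ℓ]} d(γ(s),x₀) (assumed attained at some s̄). Then ℓ ≥ M/(L²+1). -/
/-!
Both endpoints of `γ` lie on `σ`, on opposite sides of `σ 0 = x₀`. The point `γ s̄` is within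
`s̄` of `γ 0` and within `ℓ - s̄` of `γ ℓ`, so `2M ≤ ℓ + d(γ 0, x₀) + d(γ ℓ, x₀)`. Along a
quasi-geodesic, passing through an intermediate point costs at most a factor `L²` plus an additive
`(L² + 2) b`, so the last two terms are at most `L² d(γ 0, γ ℓ) + (L² + 2) b ≤ L² ℓ + (L² + 2) b`.
Finally `γ 0` is at distance at least `R₁ ≥ 2 (L² + 2) b` from `x₀`, so the additive error is at
most `M / 2`, which leaves `M ≤ (L² + 1) ℓ`.
-/

open Set NNReal

section QuasiIsometricEmbedding

variable {X : Type*} [PseudoMetricSpace X] {σ : ℝ → X} {L b : ℝ}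

theorem le_dist_of_mul_add_le_abs_sub (hL : 0 < L)
    (hlow : ∀ t t' : ℝ, L⁻¹ * |t - t'| - b ≤ dist (σ t) (σ t')) {R t t' : ℝ}
    (h : L * (b + R) ≤ |t - t'|) : R ≤ dist (σ t) (σ t') := by
  have hinv : b + R ≤ L⁻¹ * |t - t'| := (le_inv_mul_iff₀ hL).2 h
  linarith [hlow t t']

theorem dist_add_dist_le_of_mem_Icc (hL : 0 < L)
    (hlow : ∀ t t' : ℝ, L⁻¹ * |t - t'| - b ≤ dist (σ t) (σ t'))
    (hup : ∀ t t' : ℝ, dist (σ t) (σ t') ≤ L * |t - t'| + b) {u w v : ℝ} (hw : w ∈ Icc u v) :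
    dist (σ u) (σ w) + dist (σ w) (σ v) ≤ L ^ 2 * dist (σ u) (σ v) + (L ^ 2 + 2) * b := by
  obtain ⟨huw, hwv⟩ := hw
  have huw' := hup u w
  have hwv' := hup w v
  have huv := hlow u v
  rw [abs_sub_comm, abs_of_nonneg (sub_nonneg.2 huw)] at huw'
  rw [abs_sub_comm, abs_of_nonneg (sub_nonneg.2 hwv)] at hwv'
  rw [abs_sub_comm, abs_of_nonneg (sub_nonneg.2 (huw.trans hwv))] at huv
  have hspan : v - u ≤ L * (dist (σ u) (σ v) + b) :=
    (inv_mul_le_iff₀ hL).1 (by linarith)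
  have : L * (v - u) ≤ L ^ 2 * (dist (σ u) (σ v) + b) := by
    rw [sq, mul_assoc]; exact mul_le_mul_of_nonneg_left hspan hL.le
  linarith

end QuasiIsometricEmbedding

theorem two_mul_dist_le_of_lipschitzOnWith {X : Type*} [PseudoMetricSpace X] {γ : ℝ → X}
    {K : ℝ≥0} {a c s : ℝ} (hγ : LipschitzOnWith K γ (Icc a c)) (hs : s ∈ Icc a c) (x : X) :
    2 * dist (γ s) x ≤ K * (c - a) + dist (γ a) x + dist (γ c) x := by
  have ha : a ∈ Icc a c := left_mem_Icc.2 (hs.1.trans hs.2)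
  have hc : c ∈ Icc a c := right_mem_Icc.2 (hs.1.trans hs.2)
  have hsa := hγ.dist_le_mul s hs a ha
  have hsc := hγ.dist_le_mul s hs c hc
  rw [Real.dist_eq, abs_of_nonneg (sub_nonneg.2 hs.1)] at hsa
  rw [Real.dist_eq, abs_sub_comm, abs_of_nonneg (sub_nonneg.2 hs.2)] at hsc
  linarith [dist_triangle (γ s) (γ a) x, dist_triangle (γ s) (γ c) x]

theorem stmt_2_general {X : Type*} [MetricSpace X] (σ : ℝ → X) (L b R₁ : ℝ)
    (hL : 1 ≤ L) (hR₁ : 2 * b * (L ^ 2 + 2) ≤ R₁)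
    (hlow : ∀ t t' : ℝ, L⁻¹ * |t - t'| - b ≤ dist (σ t) (σ t'))
    (hup : ∀ t t' : ℝ, dist (σ t) (σ t') ≤ L * |t - t'| + b)
    (x₀ : X) (hx₀ : x₀ = σ 0) (t₁ : ℝ) (ht₁ : t₁ = L * (b + R₁))
    (ℓ : ℝ) (γ : ℝ → X)
    (hγlip : LipschitzOnWith 1 γ (Set.Icc 0 ℓ))
    (hγ0 : γ 0 ∈ σ '' Set.Iic (-t₁)) (hγℓ : γ ℓ ∈ σ '' Set.Ici t₁)
    (M : ℝ) (sbar : ℝ) (hsbar : sbar ∈ Set.Icc 0 ℓ) (hM : M = dist (γ sbar) x₀)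
    (hMsup : ∀ s ∈ Set.Icc 0 ℓ, dist (γ s) x₀ ≤ M) :
    M / (L ^ 2 + 1) ≤ ℓ := by
  obtain ⟨u, hu, hσu⟩ := hγ0
  obtain ⟨v, hv, hσv⟩ := hγℓ
  subst hx₀ ht₁
  have hL0 : 0 < L := one_pos.trans_le hL
  have hb : 0 ≤ b := by simpa using hlow 0 0
  have ht₁ : 0 ≤ L * (b + R₁) := mul_nonneg hL0.le (by nlinarith [sq_nonneg L])
  have h0 : (0 : ℝ) ∈ Icc 0 ℓ := left_mem_Icc.2 (hsbar.1.trans hsbar.2)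
  have hR₁M : R₁ ≤ M := by
    have hfar : L * (b + R₁) ≤ |u - 0| := by
      rw [sub_zero]; exact (le_neg.1 hu).trans (neg_le_abs u)
    exact (le_dist_of_mul_add_le_abs_sub hL0 hlow hfar).trans (hσu ▸ hMsup 0 h0)
  have hends : dist (γ 0) (σ 0) + dist (γ ℓ) (σ 0) ≤ L ^ 2 * ℓ + (L ^ 2 + 2) * b := by
    have hquasi := dist_add_dist_le_of_mem_Icc hL0 hlow hup
      (u := u) (w := 0) (v := v)
      ⟨by linarith [mem_Iic.1 hu], by linarith [mem_Ici.1 hv]⟩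
    have hγ0ℓ : dist (γ 0) (γ ℓ) ≤ ℓ := by
      simpa [Real.dist_eq, abs_of_nonneg h0.2] using
        hγlip.dist_le_mul 0 h0 ℓ (right_mem_Icc.2 h0.2)
    rw [hσu, hσv, dist_comm (σ 0)] at hquasi
    linarith [mul_le_mul_of_nonneg_left hγ0ℓ (sq_nonneg L)]
  have hmid := two_mul_dist_le_of_lipschitzOnWith hγlip hsbar (σ 0)
  rw [← hM] at hmid
  rw [div_le_iff₀ (by positivity)]
  push_cast at hmid
  linarith [h0.2, mul_nonneg (sq_nonneg L) h0.2]

theorem stmt_2 {X : Type*} [MetricSpace X] (σ : ℝ → X) (L b R₁ : ℝ)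
    (hL : 1 ≤ L) (hb : 0 < b) (hR₁ : 2 * b * (L ^ 2 + 2) ≤ R₁)
    (hlow : ∀ t t' : ℝ, L⁻¹ * |t - t'| - b ≤ dist (σ t) (σ t'))
    (hup : ∀ t t' : ℝ, dist (σ t) (σ t') ≤ L * |t - t'| + b)
    (x₀ : X) (hx₀ : x₀ = σ 0) (t₁ : ℝ) (ht₁ : t₁ = L * (b + R₁))
    (ℓ : ℝ) (hℓ : 0 ≤ ℓ) (γ : ℝ → X)
    (hγlip : LipschitzOnWith 1 γ (Set.Icc 0 ℓ))
    (hγ0 : γ 0 ∈ σ '' Set.Iic (-t₁)) (hγℓ : γ ℓ ∈ σ '' Set.Ici t₁)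
    (M : ℝ) (sbar : ℝ) (hsbar : sbar ∈ Set.Icc 0 ℓ) (hM : M = dist (γ sbar) x₀)
    (hMsup : ∀ s ∈ Set.Icc 0 ℓ, dist (γ s) x₀ ≤ M) :
    M / (L ^ 2 + 1) ≤ ℓ :=
  stmt_2_general σ L b R₁ hL hR₁ hlow hup x₀ hx₀ t₁ ht₁ ℓ γ hγlip hγ0 hγℓ M sbar hsbar hM hMsup
end

section
/- Let f: X → Y be a homeomorphism between metric spaces with Y proper (closed balls compact). If (Eₙ)ₙ is an increasing sequence of nonempty compact subsets of X whose union E = ⋃ₙ Eₙ is unbounded, then diam f(Eₙ) → ∞ as n → ∞. -/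
/-!
The diameters of `f '' E n` increase. If they stayed bounded, the increasing union `f '' E` would
be bounded, hence relatively compact since `Y` is proper, and pulling back along the proper map `f`
would make `E` bounded.
-/

open Filter Set Metric Bornology

lemma IsProperMap.isBounded_preimage {X Y : Type*} [PseudoMetricSpace X] [PseudoMetricSpace Y]
    [ProperSpace Y] {f : X → Y} (hf : IsProperMap f) {s : Set Y} (hs : IsBounded s) :
    IsBounded (f ⁻¹' s) :=
  (hf.isCompact_preimage hs.isCompact_closure).isBounded.subset (preimage_mono subset_closure)

lemma Metric.isBounded_iUnion_of_directed {α ι : Type*} [PseudoMetricSpace α] {s : ι → Set α}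
    (hdir : Directed (· ⊆ ·) s) (hs : ∀ i, IsBounded (s i)) {b : ℝ} (hb : ∀ i, diam (s i) ≤ b) :
    IsBounded (⋃ i, s i) := by
  rcases (⋃ i, s i).eq_empty_or_nonempty with h | ⟨x, hx⟩
  · simp [h]
  obtain ⟨i, hi⟩ := mem_iUnion.1 hx
  refine (isBounded_closedBall (x := x) (r := b)).subset (iUnion_subset fun j y hy => ?_)
  obtain ⟨k, hik, hjk⟩ := hdir i j
  exact mem_closedBall.2 ((dist_le_diam_of_mem (hs k) (hjk hy) (hik hi)).trans (hb k))

theorem stmt_7_general {X Y : Type*} [MetricSpace X] [MetricSpace Y] [ProperSpace Y]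
    (f : X ≃ₜ Y) (E : ℕ → Set X)
    (hmono : Monotone E) (hcpt : ∀ n, IsCompact (E n))
    (hunb : ¬ Bornology.IsBounded (⋃ n, E n)) :
    Tendsto (fun n => Metric.diam (f '' E n)) atTop atTop := by
  have hbdd : ∀ n, IsBounded (f '' E n) := fun n => ((hcpt n).image f.continuous).isBounded
  have hmono' : Monotone fun n => f '' E n := fun m n h => image_mono (hmono h)
  refine tendsto_atTop_atTop_of_monotone' (fun m n h => diam_mono (hmono' h) (hbdd n)) ?_
  rintro ⟨b, hb⟩
  have hunion : IsBounded (⋃ n, f '' E n) :=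
    isBounded_iUnion_of_directed hmono'.directed_le hbdd fun n => hb ⟨n, rfl⟩
  rw [← image_iUnion] at hunion
  exact hunb (f.preimage_image (⋃ n, E n) ▸ f.isProperMap.isBounded_preimage hunion)

theorem stmt_7 {X Y : Type*} [MetricSpace X] [MetricSpace Y] [ProperSpace Y]
    (f : X ≃ₜ Y) (E : ℕ → Set X)
    (hmono : Monotone E) (hne : ∀ n, (E n).Nonempty) (hcpt : ∀ n, IsCompact (E n))
    (hunb : ¬ Bornology.IsBounded (⋃ n, E n)) :
    Tendsto (fun n => Metric.diam (f '' E n)) atTop atTop :=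
  stmt_7_general f E hmono hcpt hunb
end

section
/- The map f: ℝ³ → ℝ³ defined by f(x,y,θ) = (−x cos θ − y sin θ, θ, 4x sin θ − 4y cos θ − 2xθ cos θ − 2yθ sin θ) satisfies f*β = 4α, where α = sin θ dx − cos θ dy and β = dt − 2y dx + 2x dy (with target coordinates (x,y,t)); moreover f is a bijection. Hence (ℝ³, ker α) and (ℝ³, ker β) are contactomorphic. -/
/-!
Writing `a = x cos θ + y sin θ` and `b = x sin θ - y cos θ`, the map is
`(x, y, θ) ↦ (-a, θ, 4b - 2θa)`. So it factors as the reflection `(x, y) ↦ (a, b)` of each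
plane `θ = const` (an involution) followed by `(a, b, θ) ↦ (-a, θ, 4b - 2θa)`, a shear up to
relabelling the coordinates. The shear pulls `β` back to `4 (db - a dθ)`, and since
`db = sin θ dx - cos θ dy + a dθ`, the reflection pulls `db - a dθ` back to `α`.
-/

namespace RotoTranslation

open Real

noncomputable def rotoReflect (p : ℝ × ℝ × ℝ) : ℝ × ℝ × ℝ :=
  (p.1 * cos p.2.2 + p.2.1 * sin p.2.2, p.1 * sin p.2.2 - p.2.1 * cos p.2.2, p.2.2)

def heisenbergShear (q : ℝ × ℝ × ℝ) : ℝ × ℝ × ℝ :=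
  (-q.1, q.2.2, 4 * q.2.1 - 2 * q.2.2 * q.1)

noncomputable def toHeisenberg : ℝ × ℝ × ℝ → ℝ × ℝ × ℝ :=
  heisenbergShear ∘ rotoReflect

noncomputable def rotoTranslationForm (p v : ℝ × ℝ × ℝ) : ℝ :=
  sin p.2.2 * v.1 - cos p.2.2 * v.2.1

def heisenbergForm (p v : ℝ × ℝ × ℝ) : ℝ :=
  v.2.2 - 2 * p.2.1 * v.1 + 2 * p.1 * v.2.1

def standardForm (q w : ℝ × ℝ × ℝ) : ℝ :=
  w.2.1 - q.1 * w.2.2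

theorem toHeisenberg_apply (p : ℝ × ℝ × ℝ) :
    toHeisenberg p = (-p.1 * cos p.2.2 - p.2.1 * sin p.2.2, p.2.2,
      4 * p.1 * sin p.2.2 - 4 * p.2.1 * cos p.2.2
        - 2 * p.1 * p.2.2 * cos p.2.2 - 2 * p.2.1 * p.2.2 * sin p.2.2) := by
  simp only [toHeisenberg, Function.comp_apply, heisenbergShear, rotoReflect, Prod.mk.injEq,
    true_and]
  constructor <;> ring

theorem rotoReflect_involutive : Function.Involutive rotoReflect := by
  rintro ⟨x, y, θ⟩
  have h := sin_sq_add_cos_sq θ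
  simp only [rotoReflect, Prod.mk.injEq, and_true]
  exact ⟨by linear_combination x * h, by linear_combination y * h⟩

theorem heisenbergShear_bijective : Function.Bijective heisenbergShear := by
  refine Function.bijective_iff_has_inverse.mpr
    ⟨fun q => (-q.1, (q.2.2 - 2 * q.2.1 * q.1) / 4, q.2.1), ?_, ?_⟩ <;>
  · rintro ⟨_, _, _⟩
    simp only [heisenbergShear, Prod.mk.injEq, and_true, true_and]
    constructor <;> ring

theorem toHeisenberg_bijective : Function.Bijective toHeisenberg :=
  heisenbergShear_bijective.comp rotoReflect_involutive.bijective

theorem differentiable_rotoReflect : Differentiable ℝ rotoReflect := by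
  unfold rotoReflect
  fun_prop

theorem differentiable_heisenbergShear : Differentiable ℝ heisenbergShear := by
  unfold heisenbergShear
  fun_prop

theorem fderiv_rotoReflect_apply (p v : ℝ × ℝ × ℝ) :
    fderiv ℝ rotoReflect p v =
      (cos p.2.2 * v.1 + sin p.2.2 * v.2.1 + (p.2.1 * cos p.2.2 - p.1 * sin p.2.2) * v.2.2,
       sin p.2.2 * v.1 - cos p.2.2 * v.2.1 + (p.1 * cos p.2.2 + p.2.1 * sin p.2.2) * v.2.2,
       v.2.2) := by
  unfold rotoReflect
  rw [DifferentiableAt.fderiv_prodMk (by fun_prop) (by fun_prop),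
    DifferentiableAt.fderiv_prodMk (by fun_prop) (by fun_prop)]
  simp (disch := fun_prop) only [fderiv_fun_add, fderiv_fun_sub, fderiv_fun_mul, fderiv_cos,
    fderiv_sin, fderiv.fst, fderiv.snd, fderiv_fun_id, ContinuousLinearMap.prod_apply,
    add_apply, sub_apply, smul_apply, ContinuousLinearMap.comp_apply,
    ContinuousLinearMap.coe_fst', ContinuousLinearMap.coe_snd', ContinuousLinearMap.id_apply,
    smul_eq_mul, Prod.mk.injEq, and_true]
  exact ⟨by ring, by ring⟩

theorem fderiv_heisenbergShear_apply (q w : ℝ × ℝ × ℝ) :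
    fderiv ℝ heisenbergShear q w =
      (-w.1, w.2.2, 4 * w.2.1 - 2 * w.2.2 * q.1 - 2 * q.2.2 * w.1) := by
  unfold heisenbergShear
  rw [DifferentiableAt.fderiv_prodMk (by fun_prop) (by fun_prop),
    DifferentiableAt.fderiv_prodMk (by fun_prop) (by fun_prop)]
  simp (disch := fun_prop) only [fderiv_fun_neg, fderiv_fun_sub, fderiv_fun_mul, fderiv_fun_const,
    fderiv.fst, fderiv.snd, fderiv_fun_id, ContinuousLinearMap.prod_apply, neg_apply, sub_apply,
    add_apply, smul_apply, Pi.zero_apply, zero_apply, ContinuousLinearMap.comp_apply,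
    ContinuousLinearMap.coe_fst', ContinuousLinearMap.coe_snd', ContinuousLinearMap.id_apply,
    smul_eq_mul, Prod.mk.injEq, true_and]
  ring

theorem heisenbergForm_heisenbergShear (q w : ℝ × ℝ × ℝ) :
    heisenbergForm (heisenbergShear q) (fderiv ℝ heisenbergShear q w) = 4 * standardForm q w := by
  rw [fderiv_heisenbergShear_apply, heisenbergForm, heisenbergShear, standardForm]
  ring

theorem standardForm_rotoReflect (p v : ℝ × ℝ × ℝ) :
    standardForm (rotoReflect p) (fderiv ℝ rotoReflect p v) = rotoTranslationForm p v := by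
  rw [fderiv_rotoReflect_apply, standardForm, rotoReflect, rotoTranslationForm]
  ring

theorem heisenbergForm_toHeisenberg (p v : ℝ × ℝ × ℝ) :
    heisenbergForm (toHeisenberg p) (fderiv ℝ toHeisenberg p v) =
      4 * rotoTranslationForm p v := by
  rw [toHeisenberg, fderiv_comp p differentiable_heisenbergShear.differentiableAt
    differentiable_rotoReflect.differentiableAt, ContinuousLinearMap.comp_apply,
    Function.comp_apply, heisenbergForm_heisenbergShear, standardForm_rotoReflect]

end RotoTranslation

open RotoTranslation in
theorem stmt_13
    (f : ℝ × ℝ × ℝ → ℝ × ℝ × ℝ)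
    (hf : ∀ p : ℝ × ℝ × ℝ,
      f p = (-p.1 * Real.cos p.2.2 - p.2.1 * Real.sin p.2.2, p.2.2,
             4 * p.1 * Real.sin p.2.2 - 4 * p.2.1 * Real.cos p.2.2
               - 2 * p.1 * p.2.2 * Real.cos p.2.2 - 2 * p.2.1 * p.2.2 * Real.sin p.2.2))
    (α β : ℝ × ℝ × ℝ → (ℝ × ℝ × ℝ) →L[ℝ] ℝ)
    (hα : ∀ (p v : ℝ × ℝ × ℝ), α p v = Real.sin p.2.2 * v.1 - Real.cos p.2.2 * v.2.1)
    (hβ : ∀ (p v : ℝ × ℝ × ℝ), β p v = v.2.2 - 2 * p.2.1 * v.1 + 2 * p.1 * v.2.1) :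
    Function.Bijective f ∧
      ∀ (p v : ℝ × ℝ × ℝ), β (f p) (fderiv ℝ f p v) = 4 * α p v := by
  obtain rfl : f = toHeisenberg := funext fun p => (hf p).trans (toHeisenberg_apply p).symm
  exact ⟨toHeisenberg_bijective, fun p v => by
    rw [hβ, hα]
    exact heisenbergForm_toHeisenberg p v⟩
end

section
/- Fix λ ∈ (1,2) and let f_λ: ℂ → ℂ be the radial stretch f_λ(z) = z|z|^{(λ−1)/(2−λ)} (with f_λ(0)=0). Let X = {(x,y) : −1 ≤ y ≤ 1} and Y = f_λ(X). Then there exists a > 0 such that Y ⊆ [−a,a]² ∪ {(x,y) : −a|x|^{λ−1} ≤ y ≤ a|x|^{λ−1}}; consequently there exist R₀ > 0 and C₀ > 0 such that the Lebesgue measure of Y ∩ B(0,r) is at most C₀ r^λ for all r ≥ R₀. -/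
/-!
With `α = (λ - 1) / (2 - λ)` the stretch multiplies norms by `‖w‖ ^ α`, so
`‖f w‖ = ‖w‖ ^ (α + 1)` while `|Im f w| = ‖w‖ ^ α |Im w| ≤ ‖w‖ ^ α`. Since `α / (α + 1) = λ - 1`,
the image of the strip lies in the cusp `|Im z| ≤ ‖z‖ ^ (λ - 1)`. Far from the origin this cusp
is thin, so `‖z‖ ≤ 2 |Re z|` there; and its part in the disc of radius `r` sits in the rectangle
`[-r, r] × [-r ^ (λ - 1), r ^ (λ - 1)]`, of area `4 r ^ λ`.
-/

open MeasureTheory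

open Complex in
theorem Complex.volume_reProdIm (s t : Set ℝ) : volume (s ×ℂ t) = volume s * volume t := by
  have h : s ×ℂ t = measurableEquivRealProd ⁻¹' (s ×ˢ t) := rfl
  rw [h, volume_preserving_equiv_real_prod.measure_preimage_equiv, Measure.volume_eq_prod,
    Measure.prod_prod]

noncomputable def radialStretch (α : ℝ) (z : ℂ) : ℂ := ((‖z‖ ^ α : ℝ) : ℂ) * z

def cusp (p : ℝ) : Set ℂ := {z | |z.im| ≤ ‖z‖ ^ p}

lemma norm_radialStretch {α : ℝ} (hα : α + 1 ≠ 0) (z : ℂ) :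
    ‖radialStretch α z‖ = ‖z‖ ^ (α + 1) := by
  rw [radialStretch, norm_mul, Complex.norm_real, Real.norm_of_nonneg (by positivity),
    Real.rpow_add_one' (norm_nonneg z) hα]

lemma radialStretch_image_strip_subset_cusp {α : ℝ} (hα : α + 1 ≠ 0) :
    radialStretch α '' {z | -1 ≤ z.im ∧ z.im ≤ 1} ⊆ cusp (α / (α + 1)) := by
  rintro _ ⟨w, hw, rfl⟩
  have him : (radialStretch α w).im = ‖w‖ ^ α * w.im := by simp [radialStretch]
  calc |(radialStretch α w).im| = ‖w‖ ^ α * |w.im| := by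
        rw [him, abs_mul, abs_of_nonneg (by positivity)]
    _ ≤ ‖w‖ ^ α := mul_le_of_le_one_right (by positivity) (abs_le.mpr hw)
    _ = ‖radialStretch α w‖ ^ (α / (α + 1)) := by
        rw [norm_radialStretch hα, ← Real.rpow_mul (norm_nonneg w), mul_div_cancel₀ _ hα]

lemma cusp_subset_square_union {p : ℝ} (hp0 : 0 ≤ p) (hp1 : p < 1) :
    ∃ a > (0 : ℝ), cusp p ⊆
      {z | |z.re| ≤ a ∧ |z.im| ≤ a} ∪ {z | |z.im| ≤ a * |z.re| ^ p} := by
  set a : ℝ := 2 ^ (1 - p)⁻¹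
  have hq : 0 < 1 - p := by linarith
  have ha : 0 < a := by positivity
  refine ⟨a, ha, fun z hz => ?_⟩
  rcases le_or_gt ‖z‖ a with hza | hza
  · exact Or.inl ⟨(Complex.abs_re_le_norm z).trans hza, (Complex.abs_im_le_norm z).trans hza⟩
  right
  have hz0 : 0 < ‖z‖ := ha.trans hza
  have h2 : 2 < ‖z‖ ^ (1 - p) := by
    calc (2 : ℝ) = a ^ (1 - p) := by
          rw [← Real.rpow_mul zero_le_two, inv_mul_cancel₀ hq.ne', Real.rpow_one]
      _ < ‖z‖ ^ (1 - p) := Real.rpow_lt_rpow ha.le hza hq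
  have him : 2 * |z.im| < ‖z‖ := by
    calc 2 * |z.im| ≤ 2 * ‖z‖ ^ p := by gcongr; exact hz
      _ < ‖z‖ ^ (1 - p) * ‖z‖ ^ p := by gcongr
      _ = ‖z‖ := by rw [← Real.rpow_add hz0, sub_add_cancel, Real.rpow_one]
  have hre : ‖z‖ ≤ 2 * |z.re| := by
    linarith [Complex.norm_le_abs_re_add_abs_im z]
  have h2a : (2 : ℝ) ^ p ≤ a :=
    Real.rpow_le_rpow_of_exponent_le one_le_two
      (hp1.le.trans ((one_le_inv₀ hq).mpr (by linarith)))
  calc |z.im| ≤ ‖z‖ ^ p := hz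
    _ ≤ (2 * |z.re|) ^ p := Real.rpow_le_rpow hz0.le hre hp0
    _ = 2 ^ p * |z.re| ^ p := Real.mul_rpow zero_le_two (abs_nonneg _)
    _ ≤ a * |z.re| ^ p := by gcongr

lemma volume_cusp_inter_closedBall_le {p : ℝ} (hp : 0 ≤ p) {r : ℝ} (hr : 0 ≤ r) :
    volume (cusp p ∩ Metric.closedBall 0 r) ≤ ENNReal.ofReal (4 * r ^ (1 + p)) := by
  have hsub :
      cusp p ∩ Metric.closedBall 0 r ⊆ Set.Icc (-r) r ×ℂ Set.Icc (-r ^ p) (r ^ p) := by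
    rintro z ⟨hz, hzr⟩
    rw [mem_closedBall_zero_iff] at hzr
    refine ⟨abs_le.mp ((Complex.abs_re_le_norm z).trans hzr), abs_le.mp ?_⟩
    exact hz.trans (Real.rpow_le_rpow (norm_nonneg z) hzr hp)
  calc volume (cusp p ∩ Metric.closedBall 0 r)
      ≤ volume (Set.Icc (-r) r ×ℂ Set.Icc (-r ^ p) (r ^ p)) := measure_mono hsub
    _ = ENNReal.ofReal (4 * r ^ (1 + p)) := by
        rw [Complex.volume_reProdIm, Real.volume_Icc, Real.volume_Icc,
          ← ENNReal.ofReal_mul (by linarith), Real.rpow_add' hr (by linarith), Real.rpow_one]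
        ring_nf

theorem stmt_18 (lam : ℝ) (hlam : 1 < lam) (hlam2 : lam < 2)
    (f : ℂ → ℂ)
    (hf : ∀ z : ℂ, f z = ((‖z‖ ^ ((lam - 1) / (2 - lam)) : ℝ) : ℂ) * z)
    (X Y : Set ℂ)
    (hX : X = {z : ℂ | -1 ≤ z.im ∧ z.im ≤ 1})
    (hY : Y = f '' X) :
    (∃ a > (0 : ℝ),
      Y ⊆ {z : ℂ | |z.re| ≤ a ∧ |z.im| ≤ a} ∪
          {z : ℂ | -a * |z.re| ^ (lam - 1) ≤ z.im ∧ z.im ≤ a * |z.re| ^ (lam - 1)}) ∧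
    ∃ R₀ > (0 : ℝ), ∃ C₀ > (0 : ℝ), ∀ r : ℝ, R₀ ≤ r →
      volume (Y ∩ Metric.closedBall 0 r) ≤ ENNReal.ofReal (C₀ * r ^ lam) := by
  have hα : 0 < (lam - 1) / (2 - lam) := div_pos (by linarith) (by linarith)
  have hexp : (lam - 1) / (2 - lam) / ((lam - 1) / (2 - lam) + 1) = lam - 1 := by
    have h2 : 2 - lam ≠ 0 := by linarith
    field_simp
    ring
  have hYcusp : Y ⊆ cusp (lam - 1) := by
    obtain rfl : f = radialStretch ((lam - 1) / (2 - lam)) := funext hf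
    subst hX hY
    simpa only [hexp] using radialStretch_image_strip_subset_cusp (add_pos hα one_pos).ne'
  obtain ⟨a, ha, hsq⟩ := cusp_subset_square_union (p := lam - 1) (by linarith) (by linarith)
  refine ⟨⟨a, ha, hYcusp.trans (hsq.trans (Set.union_subset_union_right _ fun z hz => ?_))⟩,
    1, one_pos, 4, four_pos, fun r hr => ?_⟩
  · simpa only [Set.mem_ofPred_eq, neg_mul] using abs_le.mp hz
  · calc volume (Y ∩ Metric.closedBall 0 r)
        ≤ volume (cusp (lam - 1) ∩ Metric.closedBall 0 r) :=
          measure_mono (Set.inter_subset_inter_left _ hYcusp)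
      _ ≤ ENNReal.ofReal (4 * r ^ lam) := by
          simpa only [add_sub_cancel] using
            volume_cusp_inter_closedBall_le (p := lam - 1) (by linarith) (by linarith)
end
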